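/- Let $X$ be a smooth plane quartic curve over a field $K$ with index $2$. Then $X$ has a closed point of degree $2$ or a closed point of degree $6$. -/
import Mathlib


/-- A smooth projective geometrically integral curve over a field `K`, abstracted to the data
needed here: closed points with their (positive) degrees `[K(P):K]`; `K`-rational divisors are
elements of the free abelian group `Point →₀ ℤ` on the closed points; the subgroup of principal
divisors (which have degree `0`); the genus; and the consequence of the Riemann–Roch theorem
that every `K`-rational divisor class of degree at least the genus contains an effective
divisor. -/
structure AbstractCurve where
  Point : Type
  deg : Point → ℕ
  deg_pos : ∀ p, 0 < deg p
  genus : ℕ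
  Principal : AddSubgroup (Point →₀ ℤ)
  principal_degree_zero : ∀ D ∈ Principal, (D.sum fun p n => n * (deg p : ℤ)) = 0
  riemannRoch : ∀ D : Point →₀ ℤ, (genus : ℤ) ≤ (D.sum fun p n => n * (deg p : ℤ)) →
    ∃ E : Point →₀ ℤ, (∀ p, 0 ≤ E p) ∧ D - E ∈ Principal

namespace AbstractCurve

/-- The degree of a `K`-rational divisor. -/
noncomputable def divDeg (C : AbstractCurve) (D : C.Point →₀ ℤ) : ℤ :=
  D.sum fun p n => n * (C.deg p : ℤ)

/-- The index of the curve: the nonnegative generator of the subgroup of `ℤ` generated by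
the degrees of the closed points (the gcd of the degrees of the closed points). -/
noncomputable def index (C : AbstractCurve) : ℕ :=
  (Submodule.IsPrincipal.generator
    (Ideal.span (Set.range fun p => ((C.deg p : ℤ))))).natAbs

end AbstractCurve

/-- A smooth plane quartic: a smooth projective geometrically integral curve of genus `3`
together with a degree-`4` embedding in `ℙ²`; the intersection with a `K`-rational line gives
a `K`-rational effective divisor of degree `4` (a line section). -/
structure PlaneQuartic extends AbstractCurve where
  genus_eq : genus = 3
  lineSection : Point →₀ ℤ
  lineSection_effective : ∀ p, 0 ≤ lineSection p
  lineSection_deg : (lineSection.sum fun p n => n * (deg p : ℤ)) = 4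

/-- a smooth plane quartic of index `2` has a closed point of degree `2` or a
closed point of degree `6`. -/
theorem planeQuartic_index_two_point_deg_two_or_six
    (C : PlaneQuartic) (h : C.index = 2) :
    ∃ p : C.Point, C.deg p = 2 ∨ C.deg p = 6 := by
  classical
  by_contra hcon
  push_neg at hcon
  set I := Ideal.span (Set.range fun p => ((C.deg p : ℤ))) with hI
  have hg : Submodule.IsPrincipal.generator I ∈ I := Submodule.IsPrincipal.generator_mem I
  have hgen : (Submodule.IsPrincipal.generator I).natAbs = 2 := h
  have h2 : (2 : ℤ) ∈ I := by
    rcases Int.natAbs_eq_iff.mp hgen with he | he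
    · rw [he] at hg; exact_mod_cast hg
    · have := I.neg_mem hg
      rw [he] at this
      simpa using this
  have hdvd : ∀ p, 2 ∣ C.deg p := by
    intro p
    have hmem : ((C.deg p : ℤ)) ∈ I := Ideal.subset_span ⟨p, rfl⟩
    rw [← Ideal.span_singleton_generator I, Ideal.mem_span_singleton] at hmem
    have : (2 : ℤ) ∣ (C.deg p : ℤ) := by
      rcases Int.natAbs_eq_iff.mp hgen with he | he
      · rw [he] at hmem; exact_mod_cast hmem
      · rw [he] at hmem; exact_mod_cast neg_dvd.mp hmem
    exact_mod_cast this
  obtain ⟨c, hc⟩ := Finsupp.mem_span_range_iff_exists_finsupp.mp h2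
  simp only [smul_eq_mul] at hc
  set D : C.Point →₀ ℤ := c + C.lineSection with hDdef
  have hD : (D.sum fun p n => n * (C.deg p : ℤ)) = 6 := by
    rw [hDdef, Finsupp.sum_add_index' (h := fun p n => n * (C.deg p : ℤ))
      (fun p => zero_mul _) (fun p b₁ b₂ => add_mul b₁ b₂ _), hc, C.lineSection_deg]
    norm_num
  obtain ⟨E, hE, hprin⟩ := C.riemannRoch D (by rw [hD, C.genus_eq]; norm_num)
  have hdegsub := C.principal_degree_zero _ hprin
  rw [Finsupp.sum_sub_index (h := fun p n => n * (C.deg p : ℤ)) (fun p b₁ b₂ => sub_mul b₁ b₂ _), hD] at hdegsub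
  have hEdeg : (E.sum fun p n => n * (C.deg p : ℤ)) = 6 := by linarith
  have hterm : ∀ p ∈ E.support, (4 : ℤ) ≤ E p * (C.deg p : ℤ) := by
    intro p hp
    have h1 : 1 ≤ E p := lt_of_le_of_ne (hE p) (Ne.symm (Finsupp.mem_support_iff.mp hp))
    have h4 : 4 ≤ C.deg p := by
      have := C.deg_pos p
      have := hdvd p
      have := hcon p
      omega
    have h4' : (4 : ℤ) ≤ (C.deg p : ℤ) := by exact_mod_cast h4
    nlinarith
  have hcard : E.support.card • (4 : ℤ) ≤ ∑ p ∈ E.support, E p * (C.deg p : ℤ) :=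
    Finset.card_nsmul_le_sum E.support _ 4 hterm
  rw [show (∑ p ∈ E.support, E p * (C.deg p : ℤ)) = E.sum fun p n => n * (C.deg p : ℤ) from rfl,
    hEdeg] at hcard
  have hcard1 : E.support.card ≤ 1 := by
    by_contra hcc
    push_neg at hcc
    have : (2 : ℤ) * 4 ≤ E.support.card • (4 : ℤ) := by
      have : (2 : ℕ) ≤ E.support.card := hcc
      calc (2 : ℤ) * 4 = (2 : ℕ) • (4 : ℤ) := by simp
        _ ≤ E.support.card • (4 : ℤ) := by
            exact nsmul_le_nsmul_left (by norm_num) this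
    linarith
  interval_cases hcc : E.support.card
  · have hE0 : E = 0 := Finsupp.card_support_eq_zero.mp hcc
    rw [hE0] at hEdeg
    simp [Finsupp.sum] at hEdeg
  · obtain ⟨p, hp⟩ := Finset.card_eq_one.mp hcc
    have hsum : (E.sum fun p n => n * (C.deg p : ℤ)) = E p * (C.deg p : ℤ) := by
      rw [Finsupp.sum, hp, Finset.sum_singleton]
    rw [hEdeg] at hsum
    have hdvd6 : (C.deg p : ℤ) ∣ 6 := ⟨E p, by linarith [mul_comm (E p) ((C.deg p : ℤ))]⟩
    have hdvd6' : C.deg p ∣ 6 := by exact_mod_cast hdvd6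
    have hle : C.deg p ≤ 6 := Nat.le_of_dvd (by norm_num) hdvd6'
    have h2d := hdvd p
    have hc2 := hcon p
    interval_cases hdd : C.deg p <;> omega
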